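/- For the Wasserstein p-distance W_p on probability measures on ℝ with finite p-th moment, for any P, Q and α, α' ∈ [0,1], W_p(αP+(1-α)Q, α'P+(1-α')Q) ≤ |α-α'|^{1/p} · W_p(P,Q). -/

import Mathlib

/-! If `a' ≤ a`, the two mixtures share the mass `a' • P + (1 - a) • Q`, which is coupled with
itself along the diagonal at zero cost; the remaining masses `(a - a') • P` and `(a - a') • Q` are
coupled by `(a - a') • π` for any coupling `π` of `P` and `Q`. The resulting cost is `|a - a'|`
times that of `π`, and taking the infimum over `π` and the `p`-th root gives the bound. -/

open MeasureTheory

/-- The set of couplings of two measures on `ℝ`. -/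
def couplings (P Q : Measure ℝ) : Set (Measure (ℝ × ℝ)) :=
  {π | π.map Prod.fst = P ∧ π.map Prod.snd = Q}

/-- The Wasserstein distance of order `p` on probability measures on `ℝ`, defined as the
infimum over couplings of the `p`-th transport cost, raised to the power `1/p`. -/
noncomputable def Wp (p : ℝ) (P Q : Measure ℝ) : ℝ :=
  (sInf {c : ℝ | ∃ π ∈ couplings P Q, c = ∫ z : ℝ × ℝ, |z.1 - z.2| ^ p ∂π}) ^ (1 / p)

/-- The mixture `a • P + (1-a) • Q`. -/
noncomputable def mixM (a : ℝ) (P Q : Measure ℝ) : Measure ℝ :=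
  ENNReal.ofReal a • P + ENNReal.ofReal (1 - a) • Q

open scoped ENNReal

section Couplings

variable {P Q P' Q' : Measure ℝ} {π π' : Measure (ℝ × ℝ)}

lemma add_mem_couplings (hπ : π ∈ couplings P Q) (hπ' : π' ∈ couplings P' Q') :
    π + π' ∈ couplings (P + P') (Q + Q') :=
  ⟨by rw [Measure.map_add _ _ measurable_fst, hπ.1, hπ'.1],
    by rw [Measure.map_add _ _ measurable_snd, hπ.2, hπ'.2]⟩

lemma smul_mem_couplings (c : ℝ≥0∞) (hπ : π ∈ couplings P Q) :
    c • π ∈ couplings (c • P) (c • Q) :=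
  ⟨by rw [Measure.map_smul, hπ.1], by rw [Measure.map_smul, hπ.2]⟩

lemma map_swap_mem_couplings (hπ : π ∈ couplings P Q) : π.map Prod.swap ∈ couplings Q P :=
  ⟨by rw [Measure.map_map measurable_fst measurable_swap]; exact hπ.2,
    by rw [Measure.map_map measurable_snd measurable_swap]; exact hπ.1⟩

lemma map_diag_mem_couplings (P : Measure ℝ) : P.map (fun x => (x, x)) ∈ couplings P P := by
  have hdiag : Measurable fun x : ℝ => (x, x) := measurable_id.prodMk measurable_id
  exact ⟨by rw [Measure.map_map measurable_fst hdiag]; exact Measure.map_id,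
    by rw [Measure.map_map measurable_snd hdiag]; exact Measure.map_id⟩

lemma prod_mem_couplings (P Q : Measure ℝ) [IsProbabilityMeasure P] [IsProbabilityMeasure Q] :
    P.prod Q ∈ couplings P Q :=
  ⟨by simp [Measure.map_fst_prod], by simp [Measure.map_snd_prod]⟩

end Couplings

noncomputable def transportCost (p : ℝ) (π : Measure (ℝ × ℝ)) : ℝ :=
  ∫ z, |z.1 - z.2| ^ p ∂π

section TransportCost

variable {p : ℝ} {π ν : Measure (ℝ × ℝ)}

lemma transportCost_nonneg (p : ℝ) (π : Measure (ℝ × ℝ)) : 0 ≤ transportCost p π :=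
  integral_nonneg fun _ => Real.rpow_nonneg (abs_nonneg _) p

lemma transportCost_map_swap (p : ℝ) (π : Measure (ℝ × ℝ)) :
    transportCost p (π.map Prod.swap) = transportCost p π := by
  have hmeas : Measurable fun z : ℝ × ℝ => |z.1 - z.2| ^ p :=
    (measurable_fst.sub measurable_snd).abs.pow_const p
  simp only [transportCost, integral_map measurable_swap.aemeasurable hmeas.aestronglyMeasurable,
    Prod.fst_swap, Prod.snd_swap, abs_sub_comm]

lemma transportCost_smul (p : ℝ) (c : ℝ≥0∞) (π : Measure (ℝ × ℝ)) :
    transportCost p (c • π) = c.toReal * transportCost p π :=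
  integral_smul_measure _ c

lemma transportCost_map_diag_add (hp : p ≠ 0) (R : Measure ℝ) (π : Measure (ℝ × ℝ)) :
    transportCost p (R.map (fun x => (x, x)) + π) = transportCost p π := by
  have hdiag : ∀ᵐ z ∂(R.map fun x => (x, x)), z.1 = z.2 :=
    (ae_map_iff (measurable_id.prodMk measurable_id).aemeasurable
      (measurableSet_eq_fun measurable_fst measurable_snd)).2 (ae_of_all _ fun _ => rfl)
  have hzero : (fun z : ℝ × ℝ => |z.1 - z.2| ^ p) =ᵐ[R.map (fun x => (x, x))] 0 :=
    hdiag.mono fun z hz => by simp [hz, Real.zero_rpow hp]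
  by_cases hπ : Integrable (fun z : ℝ × ℝ => |z.1 - z.2| ^ p) π
  · rw [transportCost, integral_add_measure ((integrable_zero _ _ _).congr hzero.symm) hπ,
      integral_eq_zero_of_ae hzero, zero_add, transportCost]
  · rw [transportCost, transportCost, integral_undef hπ,
      integral_undef fun h => hπ (integrable_add_measure.mp h).2]

end TransportCost
section Mixtures

variable {b c : ℝ}

lemma mixM_one_sub (a : ℝ) (P Q : Measure ℝ) : mixM (1 - a) Q P = mixM a P Q := by
  rw [mixM, mixM, sub_sub_cancel 1 a, add_comm]

lemma mixM_eq_add_smul_left (hb : 0 ≤ b) (hbc : b ≤ c) (P Q : Measure ℝ) :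
    mixM c P Q =
      (ENNReal.ofReal b • P + ENNReal.ofReal (1 - c) • Q) + ENNReal.ofReal (c - b) • P := by
  have hsplit : ENNReal.ofReal c = ENNReal.ofReal b + ENNReal.ofReal (c - b) := by
    rw [← ENNReal.ofReal_add hb (sub_nonneg.2 hbc), add_sub_cancel]
  rw [mixM, hsplit, add_smul]
  abel

lemma mixM_eq_add_smul_right (hbc : b ≤ c) (hc : c ≤ 1) (P Q : Measure ℝ) :
    mixM b P Q =
      (ENNReal.ofReal b • P + ENNReal.ofReal (1 - c) • Q) + ENNReal.ofReal (c - b) • Q := by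
  have hsplit : ENNReal.ofReal (1 - b) = ENNReal.ofReal (1 - c) + ENNReal.ofReal (c - b) := by
    rw [← ENNReal.ofReal_add (sub_nonneg.2 hc) (sub_nonneg.2 hbc)]
    ring_nf
  rw [mixM, hsplit, add_smul, add_assoc]

lemma exists_coupling_mixM_of_le {p : ℝ} (hp : p ≠ 0) {P Q : Measure ℝ} {π : Measure (ℝ × ℝ)}
    (hπ : π ∈ couplings P Q) (hb : 0 ≤ b) (hbc : b ≤ c) (hc : c ≤ 1) :
    ∃ μ ∈ couplings (mixM c P Q) (mixM b P Q),
      transportCost p μ = (c - b) * transportCost p π := by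
  set R := ENNReal.ofReal b • P + ENNReal.ofReal (1 - c) • Q
  refine ⟨R.map (fun x => (x, x)) + ENNReal.ofReal (c - b) • π, ?_, ?_⟩
  · rw [mixM_eq_add_smul_left hb hbc, mixM_eq_add_smul_right hbc hc]
    exact add_mem_couplings (map_diag_mem_couplings R) (smul_mem_couplings _ hπ)
  · rw [transportCost_map_diag_add hp, transportCost_smul,
      ENNReal.toReal_ofReal (sub_nonneg.2 hbc)]

lemma exists_coupling_mixM {p : ℝ} (hp : p ≠ 0) {P Q : Measure ℝ} {π : Measure (ℝ × ℝ)}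
    (hπ : π ∈ couplings P Q) {a a' : ℝ} (ha : a ∈ Set.Icc (0 : ℝ) 1)
    (ha' : a' ∈ Set.Icc (0 : ℝ) 1) :
    ∃ μ ∈ couplings (mixM a P Q) (mixM a' P Q),
      transportCost p μ = |a - a'| * transportCost p π := by
  rcases le_total a' a with h | h
  · rw [abs_of_nonneg (sub_nonneg.2 h)]
    exact exists_coupling_mixM_of_le hp hπ ha'.1 h ha.2
  · obtain ⟨μ, hμ, hcost⟩ := exists_coupling_mixM_of_le hp (map_swap_mem_couplings hπ)
      (sub_nonneg.2 ha'.2) (sub_le_sub_left h 1) (sub_le_self 1 ha.1)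
    rw [mixM_one_sub, mixM_one_sub] at hμ
    refine ⟨μ, hμ, ?_⟩
    rw [hcost, transportCost_map_swap, abs_of_nonpos (sub_nonpos.2 h)]
    ring

end Mixtures

lemma Wp_le_rpow_mul_Wp {p k : ℝ} (hp : 0 < p) (hk : 0 ≤ k) {P Q P' Q' : Measure ℝ}
    (hne : (couplings P Q).Nonempty)
    (h : ∀ π ∈ couplings P Q, ∃ μ ∈ couplings P' Q', transportCost p μ = k * transportCost p π) :
    Wp p P' Q' ≤ k ^ (1 / p) * Wp p P Q := by
  set S := {x : ℝ | ∃ π ∈ couplings P Q, x = transportCost p π}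
  set T := {x : ℝ | ∃ μ ∈ couplings P' Q', x = transportCost p μ}
  have hS : S.Nonempty := ⟨_, hne.some, hne.some_mem, rfl⟩
  have hT : BddBelow T := ⟨0, by rintro _ ⟨μ, -, rfl⟩; exact transportCost_nonneg p μ⟩
  have hTS : sInf T ≤ k * sInf S := by
    rw [← smul_eq_mul, ← Real.sInf_smul_of_nonneg hk]
    refine le_csInf hS.smul_set ?_
    rintro _ ⟨_, ⟨π, hπ, rfl⟩, rfl⟩
    obtain ⟨μ, hμ, hcost⟩ := h π hπ
    exact csInf_le hT ⟨μ, hμ, hcost.symm⟩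
  have hT0 : 0 ≤ sInf T := Real.sInf_nonneg fun _ ⟨μ, _, hx⟩ => hx ▸ transportCost_nonneg p μ
  have hS0 : 0 ≤ sInf S := Real.sInf_nonneg fun _ ⟨π, _, hx⟩ => hx ▸ transportCost_nonneg p π
  calc Wp p P' Q' = sInf T ^ (1 / p) := rfl
    _ ≤ (k * sInf S) ^ (1 / p) := Real.rpow_le_rpow hT0 hTS (by positivity)
    _ = k ^ (1 / p) * Wp p P Q := Real.mul_rpow hk hS0

theorem wasserstein_mixture_coefficient_bound_general
    (p : ℝ) (hp : 1 ≤ p) (P Q : Measure ℝ)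
    [IsProbabilityMeasure P] [IsProbabilityMeasure Q]
    (a a' : ℝ) (ha : a ∈ Set.Icc (0:ℝ) 1) (ha' : a' ∈ Set.Icc (0:ℝ) 1) :
    Wp p (mixM a P Q) (mixM a' P Q) ≤ |a - a'| ^ (1 / p) * Wp p P Q :=
  Wp_le_rpow_mul_Wp (by linarith) (abs_nonneg _) ⟨P.prod Q, prod_mem_couplings P Q⟩
    fun _ hπ => exists_coupling_mixM (by linarith) hπ ha ha'

/-- `W_p(αP+(1-α)Q, α'P+(1-α')Q) ≤ |α-α'|^{1/p} ⬝ W_p(P,Q)`. -/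
theorem wasserstein_mixture_coefficient_bound
    (p : ℝ) (hp : 1 ≤ p) (P Q : Measure ℝ)
    [IsProbabilityMeasure P] [IsProbabilityMeasure Q]
    (hPfin : (∫⁻ x, ENNReal.ofReal (|x| ^ p) ∂P) < ⊤)
    (hQfin : (∫⁻ x, ENNReal.ofReal (|x| ^ p) ∂Q) < ⊤)
    (a a' : ℝ) (ha : a ∈ Set.Icc (0:ℝ) 1) (ha' : a' ∈ Set.Icc (0:ℝ) 1) :
    Wp p (mixM a P Q) (mixM a' P Q) ≤ |a - a'| ^ (1 / p) * Wp p P Q :=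
  wasserstein_mixture_coefficient_bound_general p hp P Q a a' ha ha'
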